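/- For every constant c > 0, the function (m, ρ) ↦ K(m, ρ) + c · I(ρ) is strictly convex on the convex set {(m, ρ) | m : E → ℝ, ρ_i > 0 for all i ∈ V, Σ_{i∈V} ρ_i = 1}. -/

import Mathlib

/-!
Along an edge `{i, j}`, the kinetic term `2 m² / (ρᵢ + ρⱼ)` is the perspective `(x, y) ↦ y f(x / y)`
of the strictly convex `f(t) = 2t²`, and the Fisher term is the perspective of the strictly convex
`g(t) = (log t)² (t + 1) / 2` at `(ρᵢ, ρⱼ)`. Perspectives of convex functions are jointly convex,
and strictly so between points with different ratios `x / y`. Two distinct densities of total mass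
one cannot have the same ratios `ρᵢ / ρⱼ` along every edge of a connected graph, so the Fisher
part is strictly convex in `ρ`; when the densities agree, the fluxes differ and the kinetic part is
strictly convex in `m`.
-/

/-- The discrete Fisher information on a graph:
`I(ρ) = Σ_{{i,j} ∈ E} (log ρ_i − log ρ_j)² (ρ_i + ρ_j)/2`,
where the sum runs over the edges of the graph, each unordered edge counted once. -/
noncomputable def discreteFisher {V : Type*} [Fintype V] [DecidableEq V]
    (G : SimpleGraph V) [DecidableRel G.Adj] (ρ : V → ℝ) : ℝ :=
  ∑ e ∈ G.edgeFinset,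
    Sym2.lift ⟨fun i j => (Real.log (ρ i) - Real.log (ρ j)) ^ 2 * (ρ i + ρ j) / 2,
      fun i j => by ring⟩ e

/-- The discrete kinetic energy `K(m, ρ) = Σ_{e={i,j}∈E} 2 m_e² / (ρ_i + ρ_j)`,
where `m` is indexed by the edges of the graph (each unordered edge counted once). -/
noncomputable def discreteKinetic {V : Type*} [Fintype V] [DecidableEq V]
    (G : SimpleGraph V) [DecidableRel G.Adj]
    (m : G.edgeSet → ℝ) (ρ : V → ℝ) : ℝ :=
  ∑ e : G.edgeSet,
    2 * m e ^ 2 / Sym2.lift ⟨fun i j => ρ i + ρ j, fun i j => by ring⟩ (e : Sym2 V)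

open Real Set

section Perspective

variable {E : Type*} [AddCommGroup E] [Module ℝ E]

noncomputable def perspective (f : E → ℝ) (x : E) (y : ℝ) : ℝ := y * f (y⁻¹ • x)

lemma inv_smul_add_smul_eq {x₁ x₂ : E} {y₁ y₂ a b : ℝ} (hy₁ : y₁ ≠ 0) (hy₂ : y₂ ≠ 0)
    (hY : a * y₁ + b * y₂ ≠ 0) :
    (a * y₁ + b * y₂)⁻¹ • (a • x₁ + b • x₂) =
      (a * y₁ / (a * y₁ + b * y₂)) • (y₁⁻¹ • x₁) +
        (b * y₂ / (a * y₁ + b * y₂)) • (y₂⁻¹ • x₂) := by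
  simp only [smul_smul, smul_add]
  congr 2 <;> field_simp

variable {D : Set E} {f : E → ℝ} {x₁ x₂ : E} {y₁ y₂ a b : ℝ}

theorem ConvexOn.perspective_combo_le (hf : ConvexOn ℝ D f) (hy₁ : 0 < y₁) (hy₂ : 0 < y₂)
    (h₁ : y₁⁻¹ • x₁ ∈ D) (h₂ : y₂⁻¹ • x₂ ∈ D) (ha : 0 < a) (hb : 0 < b) :
    perspective f (a • x₁ + b • x₂) (a * y₁ + b * y₂) ≤
      a * perspective f x₁ y₁ + b * perspective f x₂ y₂ := by
  have hY : 0 < a * y₁ + b * y₂ := by positivity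
  have key := hf.2 h₁ h₂ (by positivity) (by positivity) (by field_simp :
    a * y₁ / (a * y₁ + b * y₂) + b * y₂ / (a * y₁ + b * y₂) = 1)
  rw [← inv_smul_add_smul_eq hy₁.ne' hy₂.ne' hY.ne'] at key
  calc perspective f (a • x₁ + b • x₂) (a * y₁ + b * y₂)
      ≤ (a * y₁ + b * y₂) * (a * y₁ / (a * y₁ + b * y₂) * f (y₁⁻¹ • x₁) +
          b * y₂ / (a * y₁ + b * y₂) * f (y₂⁻¹ • x₂)) := mul_le_mul_of_nonneg_left key hY.le
    _ = a * perspective f x₁ y₁ + b * perspective f x₂ y₂ := by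
      unfold perspective; field_simp

theorem StrictConvexOn.perspective_combo_lt (hf : StrictConvexOn ℝ D f) (hy₁ : 0 < y₁)
    (hy₂ : 0 < y₂) (h₁ : y₁⁻¹ • x₁ ∈ D) (h₂ : y₂⁻¹ • x₂ ∈ D) (hne : y₁⁻¹ • x₁ ≠ y₂⁻¹ • x₂)
    (ha : 0 < a) (hb : 0 < b) :
    perspective f (a • x₁ + b • x₂) (a * y₁ + b * y₂) <
      a * perspective f x₁ y₁ + b * perspective f x₂ y₂ := by
  have hY : 0 < a * y₁ + b * y₂ := by positivity
  have key := hf.2 h₁ h₂ hne (by positivity) (by positivity) (by field_simp :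
    a * y₁ / (a * y₁ + b * y₂) + b * y₂ / (a * y₁ + b * y₂) = 1)
  rw [← inv_smul_add_smul_eq hy₁.ne' hy₂.ne' hY.ne'] at key
  calc perspective f (a • x₁ + b • x₂) (a * y₁ + b * y₂)
      < (a * y₁ + b * y₂) * (a * y₁ / (a * y₁ + b * y₂) * f (y₁⁻¹ • x₁) +
          b * y₂ / (a * y₁ + b * y₂) * f (y₂⁻¹ • x₂)) := mul_lt_mul_of_pos_left key hY
    _ = a * perspective f x₁ y₁ + b * perspective f x₂ y₂ := by
      unfold perspective; field_simp

end Perspective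

lemma perspective_sq (x y : ℝ) : perspective (· ^ 2) x y = x ^ 2 / y := by
  rcases eq_or_ne y 0 with rfl | hy
  · simp [perspective]
  · simp only [perspective, smul_eq_mul]
    field_simp

lemma two_mul_sq_div_combo_le {M N s t a b : ℝ} (hs : 0 < s) (ht : 0 < t) (ha : 0 < a)
    (hb : 0 < b) :
    2 * (a * M + b * N) ^ 2 / (a * s + b * t) ≤ a * (2 * M ^ 2 / s) + b * (2 * N ^ 2 / t) := by
  have h := (even_two.convexOn_pow (𝕜 := ℝ)).perspective_combo_le hs ht
    (mem_univ (s⁻¹ • M)) (mem_univ (t⁻¹ • N)) ha hb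
  simp only [perspective_sq, smul_eq_mul] at h
  simp only [mul_div_assoc]
  linarith

lemma strictConvexOn_two_mul_sq_div {s : ℝ} (hs : 0 < s) :
    StrictConvexOn ℝ univ fun M : ℝ => 2 * M ^ 2 / s := by
  refine ⟨convex_univ, fun M _ N _ hMN a b ha hb hab => ?_⟩
  have h := (even_two.strictConvexOn_pow two_ne_zero).2 (mem_univ M) (mem_univ N) hMN ha hb hab
  simp only [smul_eq_mul] at h ⊢
  calc 2 * (a * M + b * N) ^ 2 / s < 2 * (a * M ^ 2 + b * N ^ 2) / s := by gcongr
    _ = a * (2 * M ^ 2 / s) + b * (2 * N ^ 2 / s) := by ring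

noncomputable def fisherProfile (t : ℝ) : ℝ := log t ^ 2 * (t + 1) / 2

lemma hasDerivAt_fisherProfile {t : ℝ} (ht : 0 < t) :
    HasDerivAt fisherProfile (log t + log t ^ 2 / 2 + log t / t) t := by
  have h := (((hasDerivAt_log ht.ne').fun_pow 2).fun_mul
    ((hasDerivAt_id' t).add_const 1)).div_const 2
  refine h.congr_deriv ?_
  field_simp
  ring

lemma hasDerivAt_deriv_fisherProfile {t : ℝ} (ht : 0 < t) :
    HasDerivAt (fun s => log s + log s ^ 2 / 2 + log s / s)
      ((t + 1 + (t - 1) * log t) / t ^ 2) t := by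
  have hlog := hasDerivAt_log ht.ne'
  have h :=
    (hlog.add ((hlog.fun_pow 2).div_const 2)).add (hlog.fun_div (hasDerivAt_id' t) ht.ne')
  refine h.congr_deriv ?_
  field_simp
  ring

lemma sub_one_mul_log_nonneg {t : ℝ} (ht : 0 < t) : 0 ≤ (t - 1) * log t := by
  rcases le_or_gt 1 t with h | h
  · exact mul_nonneg (sub_nonneg.2 h) (log_nonneg h)
  · exact mul_nonneg_of_nonpos_of_nonpos (by linarith) (log_nonpos ht.le h.le)

theorem strictConvexOn_fisherProfile : StrictConvexOn ℝ (Ioi 0) fisherProfile := by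
  refine strictConvexOn_of_deriv2_pos' (convex_Ioi 0)
    (fun t ht => (hasDerivAt_fisherProfile ht).continuousAt.continuousWithinAt)
    fun t (ht : 0 < t) => ?_
  have hderiv : deriv fisherProfile =ᶠ[nhds t] fun s => log s + log s ^ 2 / 2 + log s / s :=
    Filter.eventually_of_mem (isOpen_Ioi.mem_nhds ht) fun s hs =>
      (hasDerivAt_fisherProfile hs).deriv
  rw [Function.iterate_succ_apply, Function.iterate_one, hderiv.deriv_eq,
    (hasDerivAt_deriv_fisherProfile ht).deriv]
  have := sub_one_mul_log_nonneg ht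
  positivity

noncomputable def fisherEdge (x y : ℝ) : ℝ := (log x - log y) ^ 2 * (x + y) / 2

lemma fisherEdge_eq_perspective {x y : ℝ} (hx : 0 < x) (hy : 0 < y) :
    fisherEdge x y = perspective fisherProfile x y := by
  rw [fisherEdge, perspective, fisherProfile, smul_eq_mul, log_mul (inv_ne_zero hy.ne') hx.ne',
    log_inv]
  field_simp
  ring

lemma fisherEdge_combo_le {x₁ y₁ x₂ y₂ a b : ℝ} (hx₁ : 0 < x₁) (hy₁ : 0 < y₁) (hx₂ : 0 < x₂)
    (hy₂ : 0 < y₂) (ha : 0 < a) (hb : 0 < b) :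
    fisherEdge (a * x₁ + b * x₂) (a * y₁ + b * y₂) ≤
      a * fisherEdge x₁ y₁ + b * fisherEdge x₂ y₂ := by
  rw [fisherEdge_eq_perspective (by positivity) (by positivity),
    fisherEdge_eq_perspective hx₁ hy₁, fisherEdge_eq_perspective hx₂ hy₂]
  exact strictConvexOn_fisherProfile.convexOn.perspective_combo_le hy₁ hy₂
    (mem_Ioi.2 (by positivity)) (mem_Ioi.2 (by positivity)) ha hb

lemma fisherEdge_combo_lt {x₁ y₁ x₂ y₂ a b : ℝ} (hx₁ : 0 < x₁) (hy₁ : 0 < y₁) (hx₂ : 0 < x₂)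
    (hy₂ : 0 < y₂) (hne : x₁ / y₁ ≠ x₂ / y₂) (ha : 0 < a) (hb : 0 < b) :
    fisherEdge (a * x₁ + b * x₂) (a * y₁ + b * y₂) <
      a * fisherEdge x₁ y₁ + b * fisherEdge x₂ y₂ := by
  rw [fisherEdge_eq_perspective (by positivity) (by positivity),
    fisherEdge_eq_perspective hx₁ hy₁, fisherEdge_eq_perspective hx₂ hy₂]
  exact strictConvexOn_fisherProfile.perspective_combo_lt hy₁ hy₂ (mem_Ioi.2 (by positivity))
    (mem_Ioi.2 (by positivity)) (by simpa only [smul_eq_mul, inv_mul_eq_div] using hne) ha hb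

lemma SimpleGraph.Reachable.eq_of_forall_adj_eq {V α : Type*} {G : SimpleGraph V} {f : V → α}
    (h : ∀ u v, G.Adj u v → f u = f v) {u v : V} (huv : G.Reachable u v) : f u = f v := by
  obtain ⟨w⟩ := huv
  induction w with
  | nil => rfl
  | cons hadj _ ih => exact (h _ _ hadj).trans ih

def positiveSimplex (V : Type*) [Fintype V] : Set (V → ℝ) :=
  {ρ | (∀ i, 0 < ρ i) ∧ ∑ i, ρ i = 1}

section Simplex

variable {V : Type*} [Fintype V]

lemma convex_positiveSimplex : Convex ℝ (positiveSimplex V) := by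
  refine fun ρ hρ τ hτ a b ha hb hab =>
    ⟨fun i => convex_Ioi (0 : ℝ) (hρ.1 i) (hτ.1 i) ha hb hab, ?_⟩
  simp [Finset.sum_add_distrib, ← Finset.mul_sum, hρ.2, hτ.2, hab]

lemma eq_of_forall_mul_eq_mul {ρ τ : V → ℝ} (h : ∀ i j, ρ i * τ j = ρ j * τ i)
    (hρ : ∑ i, ρ i = 1) (hτ : ∑ i, τ i = 1) : ρ = τ := by
  funext i
  calc ρ i = ∑ j, ρ i * τ j := by rw [← Finset.mul_sum, hτ, mul_one]
    _ = ∑ j, ρ j * τ i := Finset.sum_congr rfl fun j _ => h i j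
    _ = τ i := by rw [← Finset.sum_mul, hρ, one_mul]

-- On a connected graph, a positive vector is determined up to scaling by its ratios along edges.
lemma SimpleGraph.Preconnected.exists_adj_div_ne {G : SimpleGraph V} (hG : G.Preconnected)
    {ρ τ : V → ℝ} (hρ : ρ ∈ positiveSimplex V) (hτ : τ ∈ positiveSimplex V) (hne : ρ ≠ τ) :
    ∃ i j, G.Adj i j ∧ ρ i / ρ j ≠ τ i / τ j := by
  by_contra! h
  refine hne (eq_of_forall_mul_eq_mul (fun i j => ?_) hρ.2 hτ.2)
  have hratio : ρ i / τ i = ρ j / τ j :=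
    (hG i j).eq_of_forall_adj_eq (f := fun k => ρ k / τ k) fun u v huv => by
      have hedge := h u v huv
      rw [div_eq_div_iff (hρ.1 v).ne' (hτ.1 v).ne'] at hedge
      rw [div_eq_div_iff (hτ.1 u).ne' (hτ.1 v).ne']
      linarith
  rwa [div_eq_div_iff (hτ.1 i).ne' (hτ.1 j).ne'] at hratio

end Simplex

lemma sym2_lift_add_pos {V : Type*} {ρ : V → ℝ} (hρ : ∀ i, 0 < ρ i) (e : Sym2 V) :
    0 < Sym2.lift ⟨fun i j => ρ i + ρ j, fun _ _ => add_comm _ _⟩ e := by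
  induction e using Sym2.ind with
  | _ i j => exact add_pos (hρ i) (hρ j)

section Graph

variable {V : Type*} [Fintype V] [DecidableEq V] (G : SimpleGraph V) [DecidableRel G.Adj]

theorem discreteKinetic_combo_le {m n : G.edgeSet → ℝ} {ρ τ : V → ℝ} (hρ : ∀ i, 0 < ρ i)
    (hτ : ∀ i, 0 < τ i) {a b : ℝ} (ha : 0 < a) (hb : 0 < b) :
    discreteKinetic G (a • m + b • n) (a • ρ + b • τ) ≤
      a * discreteKinetic G m ρ + b * discreteKinetic G n τ := by
  simp only [discreteKinetic, Finset.mul_sum, ← Finset.sum_add_distrib]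
  refine Finset.sum_le_sum fun ⟨e, he⟩ _ => ?_
  induction e using Sym2.ind with
  | _ i j =>
    simp only [Sym2.lift_mk, Pi.add_apply, Pi.smul_apply, smul_eq_mul]
    rw [show a * ρ i + b * τ i + (a * ρ j + b * τ j) = a * (ρ i + ρ j) + b * (τ i + τ j) by
      ring]
    exact two_mul_sq_div_combo_le (add_pos (hρ i) (hρ j)) (add_pos (hτ i) (hτ j)) ha hb

theorem discreteKinetic_strictConvexOn {ρ : V → ℝ} (hρ : ∀ i, 0 < ρ i) :
    StrictConvexOn ℝ univ fun m => discreteKinetic G m ρ := by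
  refine ⟨convex_univ, fun m _ n _ hmn a b ha hb hab => ?_⟩
  obtain ⟨e₀, he₀⟩ := Function.ne_iff.mp hmn
  have hedge (e : G.edgeSet) :=
    strictConvexOn_two_mul_sq_div (sym2_lift_add_pos hρ (e : Sym2 V))
  simp only [discreteKinetic, smul_eq_mul, Finset.mul_sum, ← Finset.sum_add_distrib]
  exact Finset.sum_lt_sum (fun e _ => (hedge e).convexOn.2 trivial trivial ha.le hb.le hab)
    ⟨e₀, Finset.mem_univ _, (hedge e₀).2 trivial trivial he₀ ha hb hab⟩

theorem discreteFisher_strictConvexOn (hG : G.Preconnected) :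
    StrictConvexOn ℝ (positiveSimplex V) (discreteFisher G) := by
  refine ⟨convex_positiveSimplex, fun ρ hρ τ hτ hne a b ha hb _ => ?_⟩
  obtain ⟨i₀, j₀, hadj, hratio⟩ := hG.exists_adj_div_ne hρ hτ hne
  simp only [discreteFisher, smul_eq_mul, Finset.mul_sum, ← Finset.sum_add_distrib]
  refine Finset.sum_lt_sum (fun e _ => ?_) ⟨s(i₀, j₀), G.mem_edgeFinset.2 hadj,
    fisherEdge_combo_lt (hρ.1 i₀) (hρ.1 j₀) (hτ.1 i₀) (hτ.1 j₀) hratio ha hb⟩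
  induction e using Sym2.ind with
  | _ i j => exact fisherEdge_combo_le (hρ.1 i) (hρ.1 j) (hτ.1 i) (hτ.1 j) ha hb

end Graph

theorem kinetic_plus_fisher_strictly_convex_general {V : Type*} [Fintype V] [DecidableEq V]
    (G : SimpleGraph V) [DecidableRel G.Adj] (hG : G.Connected)
    (c : ℝ) (hc : 0 < c) :
    StrictConvexOn ℝ
      {p : (G.edgeSet → ℝ) × (V → ℝ) | (∀ i, 0 < p.2 i) ∧ ∑ i, p.2 i = 1}
      (fun p => discreteKinetic G p.1 p.2 + c * discreteFisher G p.2) := by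
  refine ⟨convex_positiveSimplex.linear_preimage (LinearMap.snd ℝ _ _), ?_⟩
  rintro ⟨m, ρ⟩ hρ ⟨n, τ⟩ hτ hne a b ha hb hab
  simp only [Prod.smul_mk, Prod.mk_add_mk, smul_eq_mul]
  rcases eq_or_ne ρ τ with rfl | hρτ
  · have hK := (discreteKinetic_strictConvexOn G hρ.1).2 trivial trivial
      (fun h : m = n => hne (by rw [h])) ha hb hab
    rw [← add_smul, hab, one_smul]
    linear_combination hK - c * discreteFisher G ρ * hab
  · have hK := discreteKinetic_combo_le G hρ.1 hτ.1 (m := m) (n := n) ha hb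
    have hI := (discreteFisher_strictConvexOn G hG.preconnected).2 hρ hτ hρτ ha hb hab
    linear_combination hK + c * hI

/-- For every constant `c > 0`, the function `(m, ρ) ↦ K(m, ρ) + c·I(ρ)` is strictly
convex on the set `{(m, ρ) | ρ_i > 0 for all i, Σ_i ρ_i = 1}` (for a connected graph). -/
theorem kinetic_plus_fisher_strictly_convex {V : Type*} [Fintype V] [DecidableEq V]
    [Nonempty V] (G : SimpleGraph V) [DecidableRel G.Adj] (hG : G.Connected)
    (c : ℝ) (hc : 0 < c) :
    StrictConvexOn ℝ
      {p : (G.edgeSet → ℝ) × (V → ℝ) | (∀ i, 0 < p.2 i) ∧ ∑ i, p.2 i = 1}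
      (fun p => discreteKinetic G p.1 p.2 + c * discreteFisher G p.2) :=
  kinetic_plus_fisher_strictly_convex_general G hG c hc
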